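/- Let Λ be a ring, W a finitely generated minimal cogenerator left Λ-module over a left artinian ring Λ, and Δ = End_Λ(W). Then for every finitely generated left Λ-module X, soc(Hom_Λ(X, W)) ≅ Hom_Λ(top(X), W) as right Δ-modules. -/

import Mathlib

universe u v

/-- A submodule `N` of `M` is essential if it intersects every nonzero submodule
nontrivially. -/
def EssentialIn {R : Type u} [Ring R] {M : Type v} [AddCommGroup M] [Module R M]
    (N : Submodule R M) : Prop :=
  ∀ L : Submodule R M, L ≠ ⊥ → N ⊓ L ≠ ⊥

/-- `i : M →ₗ[R] E` exhibits `E` as an injective hull of `M`. -/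
def IsInjHull (R : Type u) [Ring R] {M : Type v} [AddCommGroup M] [Module R M]
    (E : Type v) [AddCommGroup E] [Module R E] (i : M →ₗ[R] E) : Prop :=
  Module.Injective R E ∧ Function.Injective i ∧ EssentialIn (LinearMap.range i)

/-- The socle of a module: the sum of all simple submodules. -/
def socle' (R : Type u) [Ring R] (M : Type v) [AddCommGroup M] [Module R M] :
    Submodule R M :=
  sSup {S : Submodule R M | IsSimpleModule R S}

/-- The (Jacobson) radical of a module: the intersection of all maximal submodules. -/
def radical' (R : Type u) [Ring R] (M : Type v) [AddCommGroup M] [Module R M] :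
    Submodule R M :=
  sInf {N : Submodule R M | IsCoatom N}

/-!
`Y ↦ {f | Y ≤ ker f}` sends submodules of `X` to `End W`-submodules of `Hom_Λ(X, W)`.
Since `X` is artinian and `W` is injective and contains a copy of every simple module, this is
an order anti-isomorphism, inverse to `T ↦ ⋂_{f ∈ T} ker f`. It therefore matches maximal
submodules of `X` with simple submodules of `Hom_Λ(X, W)`, and so sends `rad X`, the meet of the
former, to the socle, the join of the latter. Finally the maps vanishing on `rad X` are
`Hom_Λ(X / rad X, W)`. Injectivity of `W = ⊕ᵢ E(Sᵢ)` holds because `W` is finitely generated,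
which forces the sum to be finite.
-/

open LinearMap Submodule OrderDual

theorem Module.Injective.of_linearEquiv {R : Type u} [Ring R] {Q Q' : Type v}
    [AddCommGroup Q] [Module R Q] [AddCommGroup Q'] [Module R Q'] [Small.{v} R]
    [Module.Injective R Q] (e : Q ≃ₗ[R] Q') : Module.Injective R Q' :=
  Module.Baer.iff_injective.mp ((Module.Baer.iff_injective.mpr ‹_›).of_equiv e)

theorem Module.Injective.exists_comp_eq_of_ker_le {R : Type u} [Ring R] {Q : Type v}
    [AddCommGroup Q] [Module R Q] [Small.{v} R] [Module.Injective R Q]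
    {M N : Type*} [AddCommGroup M] [Module R M] [AddCommGroup N] [Module R N]
    (φ : M →ₗ[R] N) {g : M →ₗ[R] Q} (hg : ker φ ≤ ker g) : ∃ h : N →ₗ[R] Q, h ∘ₗ φ = g := by
  obtain ⟨h, hh⟩ := Module.Injective.extension_property R Q _ _ ((ker φ).liftQ φ le_rfl)
    (LinearMap.ker_eq_bot.mp (ker_liftQ_eq_bot _ _ _ le_rfl)) ((ker φ).liftQ g hg)
  exact ⟨h, LinearMap.ext fun x => congr($hh (Submodule.Quotient.mk x))⟩

theorem DirectSum.finite_of_moduleFinite (R : Type*) [Semiring R] {ι : Type*} (M : ι → Type*)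
    [∀ i, AddCommMonoid (M i)] [∀ i, Module R (M i)] [∀ i, Nontrivial (M i)]
    [Module.Finite R (DirectSum ι M)] : Finite ι := by
  classical
  obtain ⟨s, hs⟩ := Module.Finite.fg_top (R := R) (M := DirectSum ι M)
  refine Set.finite_univ_iff.mp ((s.sup DFinsupp.support).finite_toSet.subset fun i _ => ?_)
  by_contra hi
  have hvanish : span R s ≤ ker (DirectSum.component R ι M i) := span_le.mpr fun x hx => by
    by_contra hxi
    exact hi (Finset.mem_sup.mpr ⟨x, hx, DFinsupp.mem_support_iff.mpr hxi⟩)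
  obtain ⟨b, hb⟩ := exists_ne (0 : M i)
  exact hb (by simpa using hvanish (hs ▸ mem_top : DirectSum.lof R ι M i b ∈ span R s))

theorem exists_finset_iInf_le {α ι : Type*} [CompleteLattice α] [WellFoundedLT α] (f : ι → α) :
    ∃ s : Finset ι, ⨅ i ∈ s, f i ≤ ⨅ i, f i :=
  CompleteLattice.IsCompactElement.exists_finset_of_le_iSup (α := αᵒᵈ)
    ((CompleteLattice.isSupFiniteCompact_iff_all_elements_compact αᵒᵈ).mp
      (CompleteLattice.WellFoundedGT.isSupFiniteCompact αᵒᵈ) _) f le_rfl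

theorem OrderIso.sSup_setOf_isAtom_eq {α β : Type*} [CompleteLattice α] [CompleteLattice β]
    (e : αᵒᵈ ≃o β) : sSup {b | IsAtom b} = e (toDual (sInf {a | IsCoatom a})) := by
  rw [toDual_sInf, e.map_sSup, ← sSup_image]
  congr
  ext b
  refine ⟨fun hb => ⟨e.symm b, ?_, e.apply_symm_apply b⟩, ?_⟩
  · exact isAtom_dual_iff_isCoatom (α := α) |>.mp ((e.symm.isAtom_iff b).mpr hb)
  · rintro ⟨a, ha, rfl⟩
    exact (e.isAtom_iff a).mpr (isAtom_dual_iff_isCoatom (α := α) |>.mpr ha)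

def EmbedsEverySimple (R : Type u) [Ring R] (W : Type v) [AddCommGroup W] [Module R W] : Prop :=
  ∀ (S : Type v) [AddCommGroup S] [Module R S], IsSimpleModule R S →
    ∃ j : S →ₗ[R] W, Function.Injective j

theorem EmbedsEverySimple.exists_not_le_ker {R : Type u} [Ring R] {W : Type v} [AddCommGroup W]
    [Module R W] [Small.{v} R] [Module.Injective R W]
    (hW : EmbedsEverySimple R W) {M : Type v} [AddCommGroup M] [Module R M] [IsArtinian R M]
    {L : Submodule R M} (hL : L ≠ ⊥) : ∃ f : M →ₗ[R] W, ¬ L ≤ ker f := by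
  obtain ⟨S, hS, hSL⟩ := (eq_bot_or_exists_atom_le L).resolve_left hL
  have : IsSimpleModule R S := isSimpleModule_iff_isAtom.mpr hS
  obtain ⟨j, hj⟩ := hW S this
  obtain ⟨f, hf⟩ := Module.Injective.extension_property R W S M S.subtype S.injective_subtype j
  refine ⟨f, fun hLf => ?_⟩
  have := IsSimpleModule.nontrivial R S
  obtain ⟨s, hs⟩ := exists_ne (0 : S)
  refine hs (hj ?_)
  rw [← hf, map_zero]
  exact hLf (hSL s.2)

section Annihilator

variable {R : Type u} [Ring R] (W : Type v) [AddCommGroup W] [Module R W]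
  {X : Type v} [AddCommGroup X] [Module R X]

def homAnnihilator (Y : Submodule R X) : Submodule (Module.End R W) (X →ₗ[R] W) where
  carrier := {f | Y ≤ ker f}
  add_mem' hf hg x hx := by simp [mem_ker.mp (hf hx), mem_ker.mp (hg hx)]
  zero_mem' x _ := rfl
  smul_mem' c f hf x hx := by simp [mem_ker.mp (hf hx)]

variable {W}

def homCoannihilator (T : Submodule (Module.End R W) (X →ₗ[R] W)) : Submodule R X :=
  ⨅ f : T, ker (f : X →ₗ[R] W)

theorem mem_homAnnihilator {Y : Submodule R X} {f : X →ₗ[R] W} :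
    f ∈ homAnnihilator W Y ↔ Y ≤ ker f :=
  Iff.rfl

theorem mem_homCoannihilator {T : Submodule (Module.End R W) (X →ₗ[R] W)} {x : X} :
    x ∈ homCoannihilator T ↔ ∀ f ∈ T, f x = 0 := by
  simp [homCoannihilator]

theorem le_homCoannihilator_iff {Y : Submodule R X} {T : Submodule (Module.End R W) (X →ₗ[R] W)} :
    Y ≤ homCoannihilator T ↔ T ≤ homAnnihilator W Y := by
  simp only [SetLike.le_def, mem_homCoannihilator, mem_homAnnihilator, mem_ker]
  exact forall₂_comm

def homAnnihilatorEquiv (Y : Submodule R X) :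
    homAnnihilator W Y ≃ₗ[Module.End R W] ((X ⧸ Y) →ₗ[R] W) where
  toFun f := Y.liftQ f f.2
  invFun k := ⟨k ∘ₗ Y.mkQ, fun y hy => by simp [(Submodule.Quotient.mk_eq_zero Y).mpr hy]⟩
  map_add' f g := by ext; rfl
  map_smul' c f := by ext; rfl
  left_inv f := by ext; rfl
  right_inv k := by ext; rfl

variable [Small.{v} R] [Module.Injective R W] [IsArtinian R X]

theorem homCoannihilator_homAnnihilator (hW : EmbedsEverySimple R W) (Y : Submodule R X) :
    homCoannihilator (homAnnihilator W Y) = Y := by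
  refine le_antisymm (by_contra fun hle => ?_) (le_homCoannihilator_iff.mpr le_rfl)
  obtain ⟨f, hf⟩ := hW.exists_not_le_ker (L := (homCoannihilator (homAnnihilator W Y)).map Y.mkQ)
    (by rwa [Ne, ← le_bot_iff, map_le_iff_le_comap, comap_bot, ker_mkQ])
  refine hf (map_le_iff_le_comap.mpr fun x hx => mem_homCoannihilator.mp hx (f ∘ₗ Y.mkQ) ?_)
  exact fun y hy => by simp [(Submodule.Quotient.mk_eq_zero Y).mpr hy]

theorem homAnnihilator_homCoannihilator (T : Submodule (Module.End R W) (X →ₗ[R] W)) :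
    homAnnihilator W (homCoannihilator T) = T := by
  classical
  refine le_antisymm (fun g hg => ?_) (le_homCoannihilator_iff.mp le_rfl)
  -- Finitely many `f ∈ T` already cut out `homCoannihilator T`; by injectivity of `W`, `g`
  -- factors through their product `X → W^s` and is thus an `End W`-combination of them.
  obtain ⟨s, hs⟩ := exists_finset_iInf_le fun f : T => ker (f : X →ₗ[R] W)
  let φ : X →ₗ[R] (s → W) := LinearMap.pi fun f => (f.1 : X →ₗ[R] W)
  have hφ : ker φ ≤ ker g := by
    rw [ker_pi]
    exact le_trans (le_iInf₂ fun f hf => iInf_le_of_le ⟨f, hf⟩ le_rfl) (hs.trans hg)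
  obtain ⟨h, rfl⟩ := Module.Injective.exists_comp_eq_of_ker_le φ hφ
  have : h ∘ₗ φ = ∑ f : s, (h ∘ₗ LinearMap.single R (fun _ => W) f) • (f.1 : X →ₗ[R] W) := by
    ext x
    conv_lhs => rw [comp_apply, ← Finset.univ_sum_single (φ x), map_sum]
    simp [φ]
  rw [this]
  exact sum_mem fun f _ => T.smul_mem _ f.1.2

variable (W X) in
def homAnnihilatorOrderIso (hW : EmbedsEverySimple R W) :
    (Submodule R X)ᵒᵈ ≃o Submodule (Module.End R W) (X →ₗ[R] W) where
  toFun Y := homAnnihilator W (ofDual Y)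
  invFun T := toDual (homCoannihilator T)
  left_inv Y := homCoannihilator_homAnnihilator hW (ofDual Y)
  right_inv := homAnnihilator_homCoannihilator
  map_rel_iff' {Y Y'} := by
    change _ ↔ ofDual Y' ≤ ofDual Y
    rw [← homCoannihilator_homAnnihilator hW (ofDual Y), le_homCoannihilator_iff]
    rfl

theorem socle'_eq_homAnnihilator_radical' (hW : EmbedsEverySimple R W) :
    socle' (Module.End R W) (X →ₗ[R] W) = homAnnihilator W (radical' R X) := by
  simp only [socle', isSimpleModule_iff_isAtom]
  exact (homAnnihilatorOrderIso W X hW).sSup_setOf_isAtom_eq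

end Annihilator

/-- The paper's right `Δ`-modules are modules over `Module.End Λ W`, which acts on
`X →ₗ[Λ] W` by postcomposition: the paper writes homomorphisms on the right. -/
theorem socle_hom_iso_hom_top_general
    (Λ : Type v) [Ring Λ] [IsArtinian Λ Λ]
    (W : Type v) [AddCommGroup W] [Module Λ W] [Module.Finite Λ W]
    -- `W` is a minimal cogenerator: `W ≅ ⊕ᵢ E(Sᵢ)` where `{Sᵢ}` is a complete set of
    -- representatives of the isomorphism classes of simple left `Λ`-modules
    (ι : Type v)
    (S : ι → Type v) [∀ i, AddCommGroup (S i)] [∀ i, Module Λ (S i)]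
    (hS : ∀ i, IsSimpleModule Λ (S i))
    (hScomplete : ∀ (S' : Type v) [AddCommGroup S'] [Module Λ S'],
      IsSimpleModule Λ S' → ∃ i, Nonempty (S' ≃ₗ[Λ] S i))
    (ES : ι → Type v) [∀ i, AddCommGroup (ES i)] [∀ i, Module Λ (ES i)]
    (iS : ∀ i, S i →ₗ[Λ] ES i) (hES : ∀ i, IsInjHull Λ (ES i) (iS i))
    (hW : Nonempty (W ≃ₗ[Λ] DirectSum ι ES))
    -- the finitely generated module `X`
    (X : Type v) [AddCommGroup X] [Module Λ X] [Module.Finite Λ X] :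
    Nonempty ((socle' (Module.End Λ W) (X →ₗ[Λ] W)) ≃ₗ[Module.End Λ W]
      ((X ⧸ radical' Λ X) →ₗ[Λ] W)) := by
  classical
  obtain ⟨eW⟩ := hW
  have (i : ι) : Nontrivial (ES i) :=
    have := (hS i).nontrivial
    (hES i).2.1.nontrivial
  have : Module.Finite Λ (DirectSum ι ES) := .equiv eW
  have : Finite ι := DirectSum.finite_of_moduleFinite Λ ES
  have := Fintype.ofFinite ι
  have (i : ι) : Module.Injective Λ (ES i) := (hES i).1
  have : Module.Injective Λ W :=
    .of_linearEquiv (eW.trans (DirectSum.linearEquivFunOnFintype Λ ι ES)).symm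
  have hembed : EmbedsEverySimple Λ W := fun S' _ _ hS' => by
    obtain ⟨i, ⟨e⟩⟩ := hScomplete S' hS'
    exact ⟨eW.symm ∘ₗ DirectSum.lof Λ ι ES i ∘ₗ iS i ∘ₗ e,
      eW.symm.injective.comp <| (DirectSum.of_injective i).comp <| (hES i).2.1.comp e.injective⟩
  exact ⟨(LinearEquiv.ofEq _ _ (socle'_eq_homAnnihilator_radical' hembed)).trans
    (homAnnihilatorEquiv _)⟩

/-- Let `Λ` be left artinian, `W` a finitely generated minimal
cogenerator (`W ≅ ⊕ᵢ E(Sᵢ)` over a complete set of representatives `Sᵢ` of the simple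
left `Λ`-modules) and `Δ = End_Λ(W)`, acting on `Hom_Λ(X, W)` by composition (the
paper's right `Δ`-modules are exactly modules over Mathlib's `Module.End Λ W`, which
acts by postcomposition, since the paper writes homomorphisms on the right).  Then for
every finitely generated `Λ`-module `X`,
`soc(Hom_Λ(X, W)) ≅ Hom_Λ(top(X), W)` as (right) `Δ`-modules, where
`top(X) = X / rad(X)`. -/
theorem socle_hom_iso_hom_top
    (Λ : Type v) [Ring Λ] [IsArtinian Λ Λ]
    (W : Type v) [AddCommGroup W] [Module Λ W] [Module.Finite Λ W]
    -- `W` is a minimal cogenerator: `W ≅ ⊕ᵢ E(Sᵢ)` where `{Sᵢ}` is a complete set of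
    -- representatives of the isomorphism classes of simple left `Λ`-modules
    (ι : Type v) [DecidableEq ι]
    (S : ι → Type v) [∀ i, AddCommGroup (S i)] [∀ i, Module Λ (S i)]
    (hS : ∀ i, IsSimpleModule Λ (S i))
    (hSpair : ∀ i j, i ≠ j → IsEmpty (S i ≃ₗ[Λ] S j))
    (hScomplete : ∀ (S' : Type v) [AddCommGroup S'] [Module Λ S'],
      IsSimpleModule Λ S' → ∃ i, Nonempty (S' ≃ₗ[Λ] S i))
    (ES : ι → Type v) [∀ i, AddCommGroup (ES i)] [∀ i, Module Λ (ES i)]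
    (iS : ∀ i, S i →ₗ[Λ] ES i) (hES : ∀ i, IsInjHull Λ (ES i) (iS i))
    (hW : Nonempty (W ≃ₗ[Λ] DirectSum ι ES))
    -- the finitely generated module `X`
    (X : Type v) [AddCommGroup X] [Module Λ X] [Module.Finite Λ X] :
    Nonempty ((socle' (Module.End Λ W) (X →ₗ[Λ] W)) ≃ₗ[Module.End Λ W]
      ((X ⧸ radical' Λ X) →ₗ[Λ] W)) :=
  socle_hom_iso_hom_top_general Λ W ι S hS hScomplete ES iS hES hW X
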